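/- Let ĥ(n, x) = Wr[H_1, H_2, H_n](x) (so ĥ(n,·) = 0 when n < 0 or n ∈ {1, 2}). Then for every integer n ∈ I = {0} ∪ {n : n ≥ 3} and every x ∈ ℝ: 4x(3 + 2x²) ĥ(n, x) = ((n−2)(n−1)/((n+1)(n+2))) ĥ(n+3, x) + 6(n−2) ĥ(n+1, x) + 12(n−1)n ĥ(n−1, x) + 8(n−2)(n−1)n ĥ(n−3, x). (This is the Miki–Tsujimoto–Durán recurrence relation for the exceptional Hermite family with λ = (1,1), K = {1,2}.) -/

import Mathlib

noncomputable section

/-- Physicists' Hermite polynomials indexed by naturals. -/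
def hermN : ℕ → Polynomial ℝ
  | 0 => 1
  | 1 => Polynomial.C 2 * Polynomial.X
  | (n + 2) => Polynomial.C 2 * Polynomial.X * hermN (n + 1)
      - Polynomial.C (2 * ((n : ℝ) + 1)) * hermN n

/-- Physicists' Hermite polynomials indexed by integers, `0` for negative index. -/
def Herm (n : ℤ) : Polynomial ℝ := if 0 ≤ n then hermN n.toNat else 0

/-- Hermite polynomial as a real function. -/
def H (n : ℤ) : ℝ → ℝ := fun x => (Herm n).eval x

/-- The Wronskian determinant of a finite family of functions. -/
def Wr {m : ℕ} (f : Fin m → ℝ → ℝ) (x : ℝ) : ℝ :=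
  Matrix.det (Matrix.of fun i j : Fin m => iteratedDeriv (j : ℕ) (f i) x)

/-- The exceptional Hermite polynomial `ĥ(n,x) = Wr[H_1, H_2, H_n](x)`
for the partition `λ = (1,1)`, `K = {1,2}`. -/
def hh2 (n : ℤ) : ℝ → ℝ := fun x => Wr ![H 1, H 2, H n] x


/-!
Expanding the Wronskian with `H_n' = 2n H_{n-1}` gives
`ĥ(n) = 16 n (n-1) (2x² + 1) H_{n-2} - 32 n x H_{n-1} + 16 H_n`.
For `k ≥ 0` the three-term recurrence, read downwards, rewrites this as a combination of `H_k`
and `H_{k+1}` alone. For `n = m + 3` every `ĥ` in the identity is then a combination of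
`H_m, …, H_{m+7}`; pushing these down to `H_m` and `H_{m+1}` with the recurrence turns the claim
into a polynomial identity in `x`, `m`, `H_m` and `H_{m+1}`. For `n = 0` the last two terms
carry the factor `n`.
-/

open Polynomial

lemma hermN_add_two (n : ℕ) :
    hermN (n + 2) = C 2 * X * hermN (n + 1) - C (2 * ((n : ℝ) + 1)) * hermN n := by
  rw [hermN]

lemma derivative_hermN_succ (n : ℕ) :
    derivative (hermN (n + 1)) = C (2 * ((n : ℝ) + 1)) * hermN n := by
  induction n using Nat.twoStepInduction with
  | zero => simp [hermN]
  | one => simp [hermN]; ring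
  | more n ih₁ ih₂ =>
    rw [hermN_add_two (n + 1)]
    simp only [derivative_sub, derivative_mul, derivative_C, derivative_X]
    rw [ih₂, ih₁, hermN_add_two n]
    push_cast
    simp only [C_add, C_mul, C_ofNat, C_1]
    ring

lemma Herm_of_neg {n : ℤ} (h : n < 0) : Herm n = 0 := by simp [Herm, h]

lemma Herm_natCast (k : ℕ) : Herm k = hermN k := by simp [Herm]

lemma derivative_Herm (n : ℤ) : derivative (Herm n) = C (2 * (n : ℝ)) * Herm (n - 1) := by
  obtain h | rfl | h := lt_trichotomy n 0
  · simp [Herm_of_neg h, Herm_of_neg (show n - 1 < 0 by omega)]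
  · simp [Herm, hermN]
  · obtain ⟨k, rfl⟩ : ∃ k : ℕ, n = (k + 1 : ℕ) := ⟨(n - 1).toNat, by omega⟩
    rw [Herm_natCast, Nat.cast_succ, add_sub_cancel_right, Herm_natCast,
      derivative_hermN_succ]
    push_cast
    ring_nf

lemma H_of_neg {n : ℤ} (h : n < 0) (x : ℝ) : H n x = 0 := by simp [H, Herm_of_neg h]

lemma H_natCast_add_two (k : ℕ) (x : ℝ) :
    H (k + 2 : ℕ) x = 2 * x * H (k + 1 : ℕ) x - 2 * ((k : ℝ) + 1) * H k x := by
  simp only [H, Herm_natCast, hermN_add_two]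
  simp

lemma H_zero (x : ℝ) : H 0 x = 1 := by simp [H, Herm, hermN]

lemma H_one (x : ℝ) : H 1 x = 2 * x := by simp [H, Herm, hermN]

lemma H_two (x : ℝ) : H 2 x = 4 * x ^ 2 - 2 := by
  have h := H_natCast_add_two 0 x
  norm_num [H_zero, H_one] at h
  linarith

lemma deriv_H (n : ℤ) : deriv (H n) = fun x => 2 * (n : ℝ) * H (n - 1) x := by
  ext x
  unfold H
  simp [Polynomial.deriv, derivative_Herm]

lemma iteratedDeriv_two_H (n : ℤ) (x : ℝ) :
    iteratedDeriv 2 (H n) x = 4 * (n : ℝ) * ((n : ℝ) - 1) * H (n - 2) x := by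
  rw [iteratedDeriv_succ', iteratedDeriv_one, deriv_H, deriv_const_mul_field', deriv_H]
  push_cast
  rw [sub_sub, one_add_one_eq_two]
  ring

lemma hh2_eq (n : ℤ) (x : ℝ) :
    hh2 n x = 16 * (n : ℝ) * ((n : ℝ) - 1) * (2 * x ^ 2 + 1) * H (n - 2) x
      - 32 * (n : ℝ) * x * H (n - 1) x + 16 * H n x := by
  simp only [hh2, Wr, Matrix.det_fin_three, Matrix.of_apply]
  simp [iteratedDeriv_two_H, deriv_H, H_zero, H_one, H_two]
  ring

lemma hh2_natCast (k : ℕ) (x : ℝ) :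
    hh2 k x = (32 * x ^ 4 - 16 * ((k : ℝ) + 1) * x ^ 2 - 8 * k + 16) * H k x
      - 8 * x * (2 * x ^ 2 - 1) * H (k + 1 : ℕ) x := by
  rw [hh2_eq]
  obtain _ | _ | j := k
  · norm_num [H_zero, H_one, H_of_neg]
    ring
  · norm_num [H_zero, H_one, H_two]
    ring
  · rw [show ((j + 2 : ℕ) : ℤ) - 2 = j by push_cast; ring,
      show ((j + 2 : ℕ) : ℤ) - 1 = (j + 1 : ℕ) by push_cast; ring,
      H_natCast_add_two (j + 1), H_natCast_add_two j]
    push_cast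
    ring

/-- The Miki–Tsujimoto–Durán recurrence relation for `λ = (1,1)`. -/
theorem stmt_18 (n : ℤ) (hn : n = 0 ∨ 3 ≤ n) (x : ℝ) :
    4 * x * (3 + 2 * x ^ 2) * hh2 n x =
      (((n : ℝ) - 2) * ((n : ℝ) - 1) / (((n : ℝ) + 1) * ((n : ℝ) + 2))) * hh2 (n + 3) x
      + 6 * ((n : ℝ) - 2) * hh2 (n + 1) x
      + 12 * ((n : ℝ) - 1) * (n : ℝ) * hh2 (n - 1) x
      + 8 * ((n : ℝ) - 2) * ((n : ℝ) - 1) * (n : ℝ) * hh2 (n - 3) x := by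
  obtain rfl | hn := hn
  · have h₀ := hh2_natCast 0 x
    have h₁ := hh2_natCast 1 x
    have h₃ := hh2_natCast 3 x
    simp only [H_natCast_add_two] at h₁ h₃
    norm_num [H_zero, H_one] at h₀ h₁ h₃ ⊢
    rw [h₀, h₁, h₃]
    ring
  obtain ⟨m, rfl⟩ : ∃ m : ℕ, n = (m + 3 : ℕ) := ⟨(n - 3).toNat, by omega⟩
  rw [show ((m + 3 : ℕ) : ℤ) + 3 = (m + 6 : ℕ) by push_cast; ring,
    show ((m + 3 : ℕ) : ℤ) + 1 = (m + 4 : ℕ) by push_cast; ring,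
    show ((m + 3 : ℕ) : ℤ) - 1 = (m + 2 : ℕ) by push_cast; ring,
    show ((m + 3 : ℕ) : ℤ) - 3 = m by push_cast; ring]
  -- `H (m + j)` unifies with `H (k + 2)` for `j ≥ 2`, so this lowers every index to `m` or `m + 1`
  simp only [hh2_natCast, H_natCast_add_two]
  push_cast
  field_simp
  ring

end
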